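/- (Realignment criterion) Let N_A, N_B ≥ 2 and let ρ be a separable bipartite density matrix on (Fin N_A × Fin N_B), i.e. ρ = Σ_{i∈s} p_i (ρ_i^A ⊗ₖ ρ_i^B) for a finite index set s, reals p_i > 0 with Σ_{i∈s} p_i = 1, and density matrices ρ_i^A of size N_A×N_A and ρ_i^B of size N_B×N_B. Then the realigned matrix satisfies ‖RM(ρ)‖_tr ≤ 1. -/

import Mathlib

open Matrix Kronecker Complex ComplexOrder

noncomputable def traceNorm {m n : Type*} [Fintype m] [Fintype n] [DecidableEq n]
    (M : Matrix m n ℂ) : ℝ :=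
  ((Matrix.posSemidef_conjTranspose_mul_self M).1.eigenvectorUnitary.1 *
    diagonal (fun i => ((Real.sqrt ((Matrix.posSemidef_conjTranspose_mul_self M).1.eigenvalues i) : ℝ) : ℂ)) *
    (star (Matrix.posSemidef_conjTranspose_mul_self M).1.eigenvectorUnitary : Matrix n n ℂ)).trace.re

def realign {NA NB : ℕ} (ρ : Matrix (Fin NA × Fin NB) (Fin NA × Fin NB) ℂ) :
    Matrix (Fin NA × Fin NA) (Fin NB × Fin NB) ℂ :=
  fun p q => ρ (p.1, q.1) (p.2, q.2)

def IsDensityMatrix {n : Type*} [Fintype n] (ρ : Matrix n n ℂ) : Prop :=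
  ρ.PosSemidef ∧ ρ.trace = 1

noncomputable def hsNorm {m n : Type*} [Fintype m] [Fintype n] (M : Matrix m n ℂ) : ℝ :=
  Real.sqrt (∑ i, ∑ j, ‖M i j‖ ^ 2)

noncomputable def hsInner {m n : Type*} [Fintype m] [Fintype n] (X Y : Matrix m n ℂ) : ℂ :=
  (Xᴴ * Y).trace

noncomputable def marginalA {NA NB : ℕ} (ρ : Matrix (Fin NA × Fin NB) (Fin NA × Fin NB) ℂ) :
    Matrix (Fin NA) (Fin NA) ℂ :=
  fun m n => ∑ μ, ρ (m, μ) (n, μ)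

noncomputable def marginalB {NA NB : ℕ} (ρ : Matrix (Fin NA × Fin NB) (Fin NA × Fin NB) ℂ) :
    Matrix (Fin NB) (Fin NB) ℂ :=
  fun μ ν => ∑ m, ρ (m, μ) (m, ν)

def SeparableState {NA NB : ℕ} (ρ : Matrix (Fin NA × Fin NB) (Fin NA × Fin NB) ℂ) : Prop :=
  ∃ (ι : Type) (s : Finset ι) (p : ι → ℝ)
    (ρA : ι → Matrix (Fin NA) (Fin NA) ℂ) (ρB : ι → Matrix (Fin NB) (Fin NB) ℂ),
    (∀ i ∈ s, 0 < p i) ∧ (∑ i ∈ s, p i = 1) ∧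
    (∀ i ∈ s, IsDensityMatrix (ρA i)) ∧ (∀ i ∈ s, IsDensityMatrix (ρB i)) ∧
    ρ = ∑ i ∈ s, (p i : ℂ) • (ρA i ⊗ₖ ρB i)

noncomputable def l2OpNorm {n : Type*} [Fintype n] [DecidableEq n] (M : Matrix n n ℂ) : ℝ :=
  ‖Matrix.toEuclideanCLM (𝕜 := ℂ) (n := n) M‖

/-!
The trace norm of `M` is attained as `re tr (Vᴴ M)` for the contraction `V = M (MᴴM)^{-1/2}`,
and for a fixed contraction `V` the functional `X ↦ re tr (Vᴴ X)` is linear. Realignment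
sends `A ⊗ₖ B` to the rank-one matrix `vec A (vec B)ᵀ`, on which this functional is at most
`‖A‖_HS ‖B‖_HS` by Cauchy–Schwarz; and a density matrix has
`‖A‖_HS² = ∑ λᵢ² ≤ (∑ λᵢ)² = 1`.
-/

open scoped MatrixOrder InnerProductSpace

section HilbertSchmidt

variable {m n : Type*} [Fintype m] [Fintype n]

lemma sq_hsNorm (A : Matrix m n ℂ) : hsNorm A ^ 2 = (Aᴴ * A).trace.re := by
  rw [hsNorm, Real.sq_sqrt (by positivity), trace, re_sum, Finset.sum_comm]
  refine Finset.sum_congr rfl fun j _ => ?_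
  simp [mul_apply, re_sum, ← normSq_eq_norm_sq, normSq_apply]

lemma norm_toLp_uncurry (A : Matrix m n ℂ) :
    ‖WithLp.toLp 2 (Function.uncurry A)‖ = hsNorm A := by
  rw [EuclideanSpace.norm_eq, hsNorm, Fintype.sum_prod_type]
  rfl

variable [DecidableEq n]

lemma Matrix.IsHermitian.trace_cfc {A : Matrix n n ℂ} (hA : A.IsHermitian) (f : ℝ → ℝ) :
    (cfc f A).trace = ∑ i, (f (hA.eigenvalues i) : ℂ) := by
  rw [hA.cfc_eq, IsHermitian.cfc, Unitary.conjStarAlgAut_apply, trace_mul_cycle,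
    Unitary.coe_star_mul_self, one_mul, trace_diagonal]
  rfl

lemma IsDensityMatrix.hsNorm_le_one {A : Matrix n n ℂ} (hA : IsDensityMatrix A) :
    hsNorm A ≤ 1 := by
  obtain ⟨hpos, htr⟩ := hA
  have hsum : ∑ i, hpos.1.eigenvalues i = 1 := by
    simpa using congrArg re (hpos.1.trace_eq_sum_eigenvalues.symm.trans htr)
  have hsq : hsNorm A ^ 2 = ∑ i, hpos.1.eigenvalues i ^ 2 := by
    rw [sq_hsNorm, hpos.1.eq, ← sq, ← cfc_pow_id (R := ℝ) A 2 hpos.1.isSelfAdjoint,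
      hpos.1.trace_cfc, re_sum]
    simp only [ofReal_re]
  have hsq_le : hsNorm A ^ 2 ≤ 1 := by
    rw [hsq, ← one_pow 2, ← hsum]
    exact Finset.sum_sq_le_sq_sum_of_nonneg fun i _ => hpos.eigenvalues_nonneg i
  exact (sq_le_one_iff₀ (Real.sqrt_nonneg _)).1 hsq_le

end HilbertSchmidt

section TraceNorm

variable {m n : Type*} [Fintype m] [Fintype n] [DecidableEq n]

lemma traceNorm_eq_re_trace_cfc_sqrt (M : Matrix m n ℂ) :
    traceNorm M = (cfc Real.sqrt (Mᴴ * M)).trace.re := by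
  rw [(posSemidef_conjTranspose_mul_self M).1.cfc_eq]
  rfl

lemma exists_contraction_traceNorm_eq_re_trace (M : Matrix m n ℂ) :
    ∃ V : Matrix m n ℂ, (1 - Vᴴ * V).PosSemidef ∧ traceNorm M = (Vᴴ * M).trace.re := by
  set A := Mᴴ * M
  have hA : IsSelfAdjoint A := isHermitian_conjTranspose_mul_self M
  have hcont : ∀ f : ℝ → ℝ, ContinuousOn f (spectrum ℝ A) :=
    fun f => A.finite_real_spectrum.continuousOn f
  -- Since `(√0)⁻¹ = 0`, `M * G` is the partial isometry in the polar decomposition of `M`.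
  let g : ℝ → ℝ := fun x => (√x)⁻¹
  set G := cfc g A
  have hG : Gᴴ = G := (cfc_predicate g A : IsSelfAdjoint G)
  have hVM : (M * G)ᴴ * M = cfc Real.sqrt A :=
    calc (M * G)ᴴ * M = G * A := by rw [conjTranspose_mul, hG, Matrix.mul_assoc]
      _ = cfc (fun x => g x * x) A := by rw [cfc_mul g _ A (hcont _) (hcont _), cfc_id' ℝ A]
      _ = cfc Real.sqrt A := cfc_congr fun x _ => by rw [mul_comm]; exact Real.div_sqrt
  refine ⟨M * G, ?_, by rw [traceNorm_eq_re_trace_cfc_sqrt, hVM]⟩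
  have hVV : (M * G)ᴴ * (M * G) = cfc (fun x => √x * g x) A := by
    rw [← Matrix.mul_assoc, hVM, cfc_mul _ g A (hcont _) (hcont _)]
  rw [hVV, ← cfc_one ℝ A, ← cfc_sub _ _ A (hcont _) (hcont _)]
  refine (cfc_nonneg fun x _ => ?_).posSemidef
  simpa using mul_inv_le_one (a := √x)

lemma norm_toLp_mulVec_le_of_posSemidef {V : Matrix m n ℂ} (hV : (1 - Vᴴ * V).PosSemidef)
    (c : n → ℂ) : ‖WithLp.toLp 2 (V *ᵥ c)‖ ≤ ‖WithLp.toLp 2 c‖ := by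
  have h := hV.re_dotProduct_nonneg c
  rw [sub_mulVec, one_mulVec, dotProduct_sub, ← mulVec_mulVec, dotProduct_mulVec, ← star_mulVec,
    RCLike.re_to_complex, sub_re, sub_nonneg] at h
  refine (pow_le_pow_iff_left₀ (norm_nonneg _) (norm_nonneg _) two_ne_zero).1 ?_
  rwa [@norm_sq_eq_re_inner ℂ, @norm_sq_eq_re_inner ℂ, EuclideanSpace.inner_toLp_toLp,
    EuclideanSpace.inner_toLp_toLp, dotProduct_comm, dotProduct_comm c]

lemma re_trace_conjTranspose_mul_vecMulVec_le {V : Matrix m n ℂ}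
    (hV : (1 - Vᴴ * V).PosSemidef) (a : m → ℂ) (b : n → ℂ) :
    (Vᴴ * vecMulVec a b).trace.re ≤ ‖WithLp.toLp 2 a‖ * ‖WithLp.toLp 2 b‖ := by
  have htr : (Vᴴ * vecMulVec a b).trace =
      ⟪(WithLp.toLp 2 (V *ᵥ star b) : EuclideanSpace ℂ m), WithLp.toLp 2 a⟫_ℂ := by
    rw [mul_vecMulVec, trace_vecMulVec, EuclideanSpace.inner_toLp_toLp, star_mulVec, star_star,
      dotProduct_comm, dotProduct_mulVec, dotProduct_comm]
  have hstar : ‖WithLp.toLp 2 (star b)‖ = ‖WithLp.toLp 2 b‖ := by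
    simp [EuclideanSpace.norm_eq]
  calc (Vᴴ * vecMulVec a b).trace.re
      ≤ ‖(WithLp.toLp 2 (V *ᵥ star b) : EuclideanSpace ℂ m)‖ * ‖WithLp.toLp 2 a‖ := by
        rw [htr]; exact re_inner_le_norm (𝕜 := ℂ) _ _
    _ ≤ ‖WithLp.toLp 2 b‖ * ‖WithLp.toLp 2 a‖ := by
        gcongr; exact hstar ▸ norm_toLp_mulVec_le_of_posSemidef hV _
    _ = _ := mul_comm _ _

end TraceNorm

section Realign

variable {NA NB : ℕ}

lemma realign_sum_smul {ι : Type*} (s : Finset ι) (c : ι → ℂ)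
    (X : ι → Matrix (Fin NA × Fin NB) (Fin NA × Fin NB) ℂ) :
    realign (∑ i ∈ s, c i • X i) = ∑ i ∈ s, c i • realign (X i) := by
  ext
  simp [realign, Matrix.sum_apply]

lemma realign_kronecker (A : Matrix (Fin NA) (Fin NA) ℂ) (B : Matrix (Fin NB) (Fin NB) ℂ) :
    realign (A ⊗ₖ B) = vecMulVec (Function.uncurry A) (Function.uncurry B) :=
  rfl

end Realign

theorem realignment_criterion_general
    (NA NB : ℕ)
    {ι : Type} (s : Finset ι) (p : ι → ℝ)
    (ρA : ι → Matrix (Fin NA) (Fin NA) ℂ) (ρB : ι → Matrix (Fin NB) (Fin NB) ℂ)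
    (hp : ∀ i ∈ s, 0 < p i) (hpsum : ∑ i ∈ s, p i = 1)
    (hρA : ∀ i ∈ s, IsDensityMatrix (ρA i)) (hρB : ∀ i ∈ s, IsDensityMatrix (ρB i))
    (ρ : Matrix (Fin NA × Fin NB) (Fin NA × Fin NB) ℂ)
    (hρ : ρ = ∑ i ∈ s, (p i : ℂ) • (ρA i ⊗ₖ ρB i)) :
    traceNorm (realign ρ) ≤ 1 := by
  obtain ⟨V, hV, hnorm⟩ := exists_contraction_traceNorm_eq_re_trace (realign ρ)
  have hterm : ∀ i ∈ s, (Vᴴ * realign (ρA i ⊗ₖ ρB i)).trace.re ≤ 1 := fun i hi =>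
    calc (Vᴴ * realign (ρA i ⊗ₖ ρB i)).trace.re ≤ hsNorm (ρA i) * hsNorm (ρB i) := by
          rw [realign_kronecker, ← norm_toLp_uncurry, ← norm_toLp_uncurry]
          exact re_trace_conjTranspose_mul_vecMulVec_le hV _ _
      _ ≤ 1 := mul_le_one₀ (hρA i hi).hsNorm_le_one (Real.sqrt_nonneg _)
          (hρB i hi).hsNorm_le_one
  calc traceNorm (realign ρ)
        = ∑ i ∈ s, p i * (Vᴴ * realign (ρA i ⊗ₖ ρB i)).trace.re := by
        rw [hnorm, hρ, realign_sum_smul, Matrix.mul_sum, trace_sum, re_sum]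
        simp [trace_smul]
    _ ≤ ∑ i ∈ s, p i * 1 :=
        Finset.sum_le_sum fun i hi => mul_le_mul_of_nonneg_left (hterm i hi) (hp i hi).le
    _ = 1 := by simpa using hpsum

theorem realignment_criterion
    (NA NB : ℕ) (hNA : 2 ≤ NA) (hNB : 2 ≤ NB)
    {ι : Type} (s : Finset ι) (p : ι → ℝ)
    (ρA : ι → Matrix (Fin NA) (Fin NA) ℂ) (ρB : ι → Matrix (Fin NB) (Fin NB) ℂ)
    (hp : ∀ i ∈ s, 0 < p i) (hpsum : ∑ i ∈ s, p i = 1)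
    (hρA : ∀ i ∈ s, IsDensityMatrix (ρA i)) (hρB : ∀ i ∈ s, IsDensityMatrix (ρB i))
    (ρ : Matrix (Fin NA × Fin NB) (Fin NA × Fin NB) ℂ)
    (hρ : ρ = ∑ i ∈ s, (p i : ℂ) • (ρA i ⊗ₖ ρB i)) :
    traceNorm (realign ρ) ≤ 1 :=
  realignment_criterion_general NA NB s p ρA ρB hp hpsum hρA hρB ρ hρ
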